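/- Let r, L > 0, let K_P, K_I ∈ M₂(ℝ) be symmetric positive definite, and let y_ref ∈ ℝ² be constant. Let y34 : ℝ → ℝ² and u₁ : ℝ → ℝ be continuous, and suppose x_c, y : ℝ → ℝ² are differentiable and satisfy for all t: x_c'(t) = y(t) − y_ref and L·y'(t) = −r·y(t) + u23(t) − y34(t) + L·u₁(t)·J·y(t), where u23(t) := −K_P·(y(t) − y_ref) − K_I·x_c(t) + y34(t) − L·u₁(t)·J·y(t). Then there exist c > 0 and γ > 0 depending only on r, L, K_P, K_I such that ‖y(t) − y_ref‖ ≤ c·e^{−γt}·(‖y(0) − y_ref‖ + ‖x_c(0) + r·K_I⁻¹·y_ref‖) for all t ≥ 0; in particular y(t) → y_ref exponentially as t → ∞. -/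

import Mathlib

open Matrix

/-- The 2×2 rotation generator `J = [[0,-1],[1,0]]`. -/
def Jmat : Matrix (Fin 2) (Fin 2) ℝ := !![0, -1; 1, 0]

/-- Euclidean norm of a vector in `ℝ²` (represented as `Fin 2 → ℝ`). -/
noncomputable def enorm2 (v : Fin 2 → ℝ) : ℝ := Real.sqrt (v 0 ^ 2 + v 1 ^ 2)

/-!
In the error coordinates `e = y - y_ref`, `z = x_c + r K_I⁻¹ y_ref` the controller cancels the
filter voltage and the frequency coupling, leaving the linear loop `L e' = -(r + K_P) e - K_I z`,
`z' = e`. For a small weight `ε > 0` the function `V = L ‖e‖² + ⟪K_I z, z⟫ + 2 L ε ⟪e, z⟫` is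
comparable to `‖e‖² + ‖z‖²` and satisfies `V' ≤ -ε a (‖e‖² + ‖z‖²)`, where `a > 0` is a coercivity
constant of `K_I`; the cross term is what makes `V'` negative in `z` too. Hence `V' ≤ -κ V`, so `V`
decays like `exp (-κ t)` by Grönwall's inequality, and `L / 2 ‖e‖² ≤ V` transfers this to `e`.
-/

open Real
open scoped RealInnerProductSpace

section Coercive
variable {E : Type*} [NormedAddCommGroup E] [InnerProductSpace ℝ E] [FiniteDimensional ℝ E]

theorem ContinuousLinearMap.exists_pos_mul_norm_sq_le_inner_self (T : E →L[ℝ] E)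
    (hT : ∀ x ≠ 0, 0 < ⟪T x, x⟫) : ∃ a > 0, ∀ x, a * ‖x‖ ^ 2 ≤ ⟪T x, x⟫ := by
  rcases subsingleton_or_nontrivial E with hE | hE
  · exact ⟨1, one_pos, fun x => by simp [Subsingleton.elim x 0]⟩
  obtain ⟨v, hv, hmin⟩ := (isCompact_sphere (0 : E) 1).exists_isMinOn
    (NormedSpace.sphere_nonempty.2 zero_le_one)
    (by fun_prop : Continuous fun x => ⟪T x, x⟫).continuousOn
  refine ⟨⟪T v, v⟫, hT v (ne_zero_of_mem_unit_sphere ⟨v, hv⟩), fun x => ?_⟩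
  rcases eq_or_ne x 0 with rfl | hx
  · simp
  have hx' : 0 < ‖x‖ := norm_pos_iff.2 hx
  have : ⟪T v, v⟫ ≤ ⟪T (‖x‖⁻¹ • x), ‖x‖⁻¹ • x⟫ := hmin (by simp [norm_smul, hx'.ne'])
  rw [map_smul, real_inner_smul_left, real_inner_smul_right] at this
  calc ⟪T v, v⟫ * ‖x‖ ^ 2 ≤ ‖x‖⁻¹ * (‖x‖⁻¹ * ⟪T x, x⟫) * ‖x‖ ^ 2 := by gcongr
    _ = ⟪T x, x⟫ := by field_simp

end Coercive

theorem le_mul_exp_of_hasDerivAt_le_neg_mul {f f' : ℝ → ℝ} {κ : ℝ}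
    (hf : ∀ t, HasDerivAt f (f' t) t) (hbound : ∀ t, f' t ≤ -κ * f t) {t : ℝ} (ht : 0 ≤ t) :
    f t ≤ f 0 * exp (-κ * t) := by
  have hcont : Continuous f := continuous_iff_continuousAt.2 fun s => (hf s).continuousAt
  simpa [gronwallBound_ε0] using le_gronwallBound_of_liminf_deriv_right_le (K := -κ) (ε := 0)
    hcont.continuousOn (fun s _ r hr => (hf s).hasDerivWithinAt.liminf_right_slope_le hr) le_rfl
    (fun s _ => by simpa using hbound s) t ⟨ht, le_rfl⟩

theorem exists_piLyapunov_weight {L p a N : ℝ} (hL : 0 < L) (hp : 0 < p) (ha : 0 < a) :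
    ∃ ε > 0, 2 * ε ≤ 1 ∧ 2 * L * ε ≤ a ∧ ε * (2 * L * a + N ^ 2 + a ^ 2) ≤ 2 * p * a := by
  refine ⟨p * a / (2 * L * a + N ^ 2 + a ^ 2 + 2 * p * a + 2 * L * p), by positivity, ?_, ?_, ?_⟩
  all_goals
    rw [← sub_nonneg]
    field_simp
    nlinarith [sq_nonneg N, mul_pos hp ha, mul_pos hL hp, mul_pos hL ha]

section PILoop
variable {E : Type*} [NormedAddCommGroup E] [InnerProductSpace ℝ E]
  {L ε a p : ℝ} {P I : E →L[ℝ] E}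

theorem abs_two_mul_real_inner_le (x y : E) : |2 * ⟪x, y⟫| ≤ ‖x‖ ^ 2 + ‖y‖ ^ 2 := by
  rw [abs_mul, abs_two]
  nlinarith [abs_real_inner_le_norm x y, two_mul_le_add_sq ‖x‖ ‖y‖]

def piLyapunov (L ε : ℝ) (I : E →L[ℝ] E) (e z : E) : ℝ :=
  L * ‖e‖ ^ 2 + ⟪I z, z⟫ + 2 * L * ε * ⟪e, z⟫

def piLyapunovDeriv (L ε : ℝ) (P I : E →L[ℝ] E) (e z : E) : ℝ :=
  -2 * ⟪P e, e⟫ + 2 * L * ε * ‖e‖ ^ 2 - 2 * ε * ⟪P e, z⟫ - 2 * ε * ⟪I z, z⟫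

theorem half_mul_norm_sq_le_piLyapunov (hL : 0 ≤ L) (hε : 0 ≤ ε) (hε₁ : 2 * ε ≤ 1)
    (hεa : 2 * L * ε ≤ a) (hI : ∀ x, a * ‖x‖ ^ 2 ≤ ⟪I x, x⟫) (e z : E) :
    L / 2 * ‖e‖ ^ 2 ≤ piLyapunov L ε I e z := by
  have hLε : 0 ≤ L * ε := mul_nonneg hL hε
  have hcross := mul_le_mul_of_nonneg_left (abs_le.mp (abs_two_mul_real_inner_le e z)).1 hLε
  have hLe : 0 ≤ (L / 2 - L * ε) * ‖e‖ ^ 2 := mul_nonneg (by nlinarith) (sq_nonneg _)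
  have haz : 0 ≤ (a - L * ε) * ‖z‖ ^ 2 := mul_nonneg (by nlinarith) (sq_nonneg _)
  rw [piLyapunov]
  nlinarith [hI z]

theorem piLyapunov_le (hL : 0 ≤ L) (hε : 0 ≤ ε) (hε₁ : 2 * ε ≤ 1) (e z : E) :
    piLyapunov L ε I e z ≤ (2 * L + ‖I‖) * (‖e‖ ^ 2 + ‖z‖ ^ 2) := by
  have hIz : ⟪I z, z⟫ ≤ ‖I‖ * ‖z‖ ^ 2 := by
    calc ⟪I z, z⟫ ≤ ‖I z‖ * ‖z‖ := real_inner_le_norm _ _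
      _ ≤ ‖I‖ * ‖z‖ * ‖z‖ := by gcongr; exact I.le_opNorm z
      _ = ‖I‖ * ‖z‖ ^ 2 := by ring
  have hLε : 0 ≤ L * ε := mul_nonneg hL hε
  have hcross := mul_le_mul_of_nonneg_left (abs_le.mp (abs_two_mul_real_inner_le e z)).2 hLε
  have hLe : 0 ≤ (L - L * ε + ‖I‖) * ‖e‖ ^ 2 :=
    mul_nonneg (by nlinarith [norm_nonneg I]) (sq_nonneg _)
  have hLz : 0 ≤ (2 * L - L * ε) * ‖z‖ ^ 2 := mul_nonneg (by nlinarith) (sq_nonneg _)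
  rw [piLyapunov]
  nlinarith

theorem HasDerivAt.piLyapunov {e z : ℝ → E} {e' : E} {t : ℝ}
    (he : HasDerivAt e e' t) (hz : HasDerivAt z (e t) t) (hIsymm : (I : E →ₗ[ℝ] E).IsSymmetric)
    (hode : L • e' = -P (e t) - I (z t)) :
    HasDerivAt (fun s => piLyapunov L ε I (e s) (z s)) (piLyapunovDeriv L ε P I (e t) (z t)) t := by
  have hIz : HasDerivAt (fun s => I (z s)) (I (e t)) t := I.hasFDerivAt.comp_hasDerivAt t hz
  refine (((he.norm_sq.const_mul L).add (hIz.inner ℝ hz)).add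
    ((he.inner ℝ hz).const_mul (2 * L * ε))).congr_deriv ?_
  have h₁ : L * ⟪e t, e'⟫ = -⟪P (e t), e t⟫ - ⟪I (z t), e t⟫ := by
    rw [← real_inner_smul_right, hode, inner_sub_right, inner_neg_right, real_inner_comm (P _),
      real_inner_comm (I _)]
  have h₂ : L * ⟪e', z t⟫ = -⟪P (e t), z t⟫ - ⟪I (z t), z t⟫ := by
    rw [← real_inner_smul_left, hode, inner_sub_left, inner_neg_left]
  have h₃ : ⟪I (e t), z t⟫ = ⟪I (z t), e t⟫ := by
    rw [real_inner_comm]; exact (hIsymm (z t) (e t)).symm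
  rw [piLyapunovDeriv, real_inner_self_eq_norm_sq, h₃]
  linear_combination 2 * h₁ + 2 * ε * h₂

theorem piLyapunovDeriv_le (ha : 0 < a) (hε : 0 ≤ ε)
    (hgain : ε * (2 * L * a + ‖P‖ ^ 2 + a ^ 2) ≤ 2 * p * a)
    (hP : ∀ x, p * ‖x‖ ^ 2 ≤ ⟪P x, x⟫) (hI : ∀ x, a * ‖x‖ ^ 2 ≤ ⟪I x, x⟫) (e z : E) :
    piLyapunovDeriv L ε P I e z ≤ -(ε * a) * (‖e‖ ^ 2 + ‖z‖ ^ 2) := by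
  have hPez : -(‖P‖ * ‖e‖ * ‖z‖) ≤ ⟪P e, z⟫ := by
    calc -(‖P‖ * ‖e‖ * ‖z‖) ≤ -(‖P e‖ * ‖z‖) := by gcongr; exact P.le_opNorm e
      _ ≤ ⟪P e, z⟫ := by nlinarith [abs_real_inner_le_norm (P e) z, neg_abs_le ⟪P e, z⟫]
  have hscalar : 2 * ε * ‖P‖ * ‖e‖ * ‖z‖
      ≤ (2 * p - 2 * L * ε - ε * a) * ‖e‖ ^ 2 + ε * a * ‖z‖ ^ 2 := by
    refine le_of_mul_le_mul_left ?_ ha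
    nlinarith [mul_nonneg hε (sq_nonneg (‖P‖ * ‖e‖ - a * ‖z‖)),
      mul_le_mul_of_nonneg_right hgain (sq_nonneg ‖e‖)]
  rw [piLyapunovDeriv]
  nlinarith [hP e, mul_le_mul_of_nonneg_left (hI z) hε, mul_le_mul_of_nonneg_left hPez hε]

theorem piLyapunov_le_mul_exp (hL : 0 < L) (ha : 0 < a) (hε : 0 < ε) (hε₁ : 2 * ε ≤ 1)
    (hgain : ε * (2 * L * a + ‖P‖ ^ 2 + a ^ 2) ≤ 2 * p * a)
    (hP : ∀ x, p * ‖x‖ ^ 2 ≤ ⟪P x, x⟫) (hI : ∀ x, a * ‖x‖ ^ 2 ≤ ⟪I x, x⟫)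
    (hIsymm : (I : E →ₗ[ℝ] E).IsSymmetric) {e e' z : ℝ → E} (he : ∀ t, HasDerivAt e (e' t) t)
    (hz : ∀ t, HasDerivAt z (e t) t) (hode : ∀ t, L • e' t = -P (e t) - I (z t)) {t : ℝ}
    (ht : 0 ≤ t) :
    piLyapunov L ε I (e t) (z t)
      ≤ piLyapunov L ε I (e 0) (z 0) * exp (-(ε * a / (2 * L + ‖I‖)) * t) := by
  refine le_mul_exp_of_hasDerivAt_le_neg_mul (fun s => (he s).piLyapunov (hz s) hIsymm (hode s))
    (fun s => (piLyapunovDeriv_le ha hε.le hgain hP hI (e s) (z s)).trans ?_) ht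
  have hV := piLyapunov_le (I := I) hL.le hε.le hε₁ (e s) (z s)
  rw [neg_mul, neg_mul, neg_le_neg_iff, div_mul_eq_mul_div, div_le_iff₀ (by positivity)]
  calc ε * a * piLyapunov L ε I (e s) (z s)
      ≤ ε * a * ((2 * L + ‖I‖) * (‖e s‖ ^ 2 + ‖z s‖ ^ 2)) :=
        mul_le_mul_of_nonneg_left hV (by positivity)
    _ = _ := by ring

theorem exists_exp_decay_of_pi_loop (hL : 0 < L) (hp : 0 < p) (ha : 0 < a)
    (hP : ∀ x, p * ‖x‖ ^ 2 ≤ ⟪P x, x⟫) (hI : ∀ x, a * ‖x‖ ^ 2 ≤ ⟪I x, x⟫)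
    (hIsymm : (I : E →ₗ[ℝ] E).IsSymmetric) :
    ∃ c > (0 : ℝ), ∃ γ > (0 : ℝ), ∀ e e' z : ℝ → E, (∀ t, HasDerivAt e (e' t) t) →
      (∀ t, HasDerivAt z (e t) t) → (∀ t, L • e' t = -P (e t) - I (z t)) →
      ∀ t ≥ (0 : ℝ), ‖e t‖ ≤ c * exp (-(γ * t)) * (‖e 0‖ + ‖z 0‖) := by
  obtain ⟨ε, hε, hε₁, hεa, hgain⟩ := exists_piLyapunov_weight (N := ‖P‖) hL hp ha
  set M := 2 * L + ‖I‖
  have hM : 0 < M := by positivity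
  refine ⟨√(2 * M / L), by positivity, ε * a / (2 * M), by positivity, ?_⟩
  intro e e' z he hz hode t ht
  have hV := piLyapunov_le_mul_exp hL ha hε hε₁ hgain hP hI hIsymm he hz hode ht
  have hlow := half_mul_norm_sq_le_piLyapunov hL.le hε.le hε₁ hεa hI (e t) (z t)
  have hup := piLyapunov_le (I := I) hL.le hε.le hε₁ (e 0) (z 0)
  have hexp : exp (-(ε * a / (2 * M) * t)) ^ 2 = exp (-(ε * a / M) * t) := by
    rw [← exp_nat_mul]; congr 1; field_simp; ring
  refine (pow_le_pow_iff_left₀ (norm_nonneg _) (by positivity) two_ne_zero).mp ?_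
  rw [mul_pow, mul_pow, sq_sqrt (by positivity), hexp]
  calc ‖e t‖ ^ 2 ≤ 2 / L * piLyapunov L ε I (e t) (z t) := by
        rw [div_mul_eq_mul_div, le_div_iff₀ hL]; linarith
    _ ≤ 2 / L * (M * (‖e 0‖ + ‖z 0‖) ^ 2 * exp (-(ε * a / M) * t)) := by
        gcongr
        refine hV.trans (mul_le_mul_of_nonneg_right (hup.trans ?_) (exp_pos _).le)
        gcongr
        nlinarith [mul_nonneg (norm_nonneg (e 0)) (norm_nonneg (z 0))]
    _ = 2 * M / L * exp (-(ε * a / M) * t) * (‖e 0‖ + ‖z 0‖) ^ 2 := by ring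

end PILoop

section EuclideanMatrix

theorem HasDerivAt.toLp {n : Type*} [Fintype n] {f : ℝ → n → ℝ} {f' : n → ℝ} {t : ℝ}
    (h : HasDerivAt f f' t) :
    HasDerivAt (fun s => WithLp.toLp 2 (f s)) (WithLp.toLp 2 f') t :=
  (PiLp.continuousLinearEquiv 2 ℝ (fun _ : n => ℝ)).symm.hasFDerivAt.comp_hasDerivAt t h

theorem enorm2_eq_norm (v : Fin 2 → ℝ) : enorm2 v = ‖WithLp.toLp 2 v‖ := by
  simp [enorm2, EuclideanSpace.norm_eq, Fin.sum_univ_two]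

variable {n : Type*} [Fintype n] [DecidableEq n] {A : Matrix n n ℝ}

theorem Matrix.PosSemidef.inner_toEuclideanCLM_self_nonneg (hA : A.PosSemidef)
    (x : EuclideanSpace ℝ n) : 0 ≤ ⟪toEuclideanCLM (𝕜 := ℝ) A x, x⟫ := by
  rw [real_inner_comm, inner_toEuclideanCLM]
  simpa using hA.dotProduct_mulVec_nonneg x.ofLp

theorem Matrix.PosDef.inner_toEuclideanCLM_self_pos (hA : A.PosDef) {x : EuclideanSpace ℝ n}
    (hx : x ≠ 0) : 0 < ⟪toEuclideanCLM (𝕜 := ℝ) A x, x⟫ := by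
  rw [real_inner_comm, inner_toEuclideanCLM]
  simpa using hA.dotProduct_mulVec_pos (x := x.ofLp) (by simpa using hx)

end EuclideanMatrix

theorem pi_closed_loop_error_eq {n : Type*} [Fintype n] [DecidableEq n] {r L u₁ : ℝ}
    {KP KI J : Matrix n n ℝ} (hKI : IsUnit KI.det) {yref y34 xc y y' u23 : n → ℝ}
    (hu23 : u23 = -(KP *ᵥ (y - yref)) - KI *ᵥ xc + y34 - L • (u₁ • J *ᵥ y))
    (hode : L • y' = (-r) • y + u23 - y34 + L • (u₁ • J *ᵥ y)) :
    L • y' = -(r • (y - yref) + KP *ᵥ (y - yref)) - KI *ᵥ (xc + r • KI⁻¹ *ᵥ yref) := by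
  rw [hode, hu23, mulVec_add, mulVec_smul, mulVec_mulVec, mul_nonsing_inv _ hKI, one_mulVec]
  simp only [smul_sub, neg_smul]
  abel

theorem pi_current_controller_exponential_regulation_general
    (r L : ℝ) (hr : 0 < r) (hL : 0 < L)
    (KP KI : Matrix (Fin 2) (Fin 2) ℝ)
    (hKP : KP.PosDef) (hKI : KI.PosDef) :
    ∃ c > (0 : ℝ), ∃ γ > (0 : ℝ),
      ∀ (yref : Fin 2 → ℝ) (y34 : ℝ → Fin 2 → ℝ) (u1 : ℝ → ℝ),
        Continuous y34 → Continuous u1 →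
        ∀ (xc y y' u23 : ℝ → Fin 2 → ℝ),
          (∀ t, u23 t = -KP.mulVec (y t - yref) - KI.mulVec (xc t) + y34 t
              - L • (u1 t • Jmat.mulVec (y t))) →
          (∀ t, HasDerivAt xc (y t - yref) t) →
          (∀ t, HasDerivAt y (y' t) t) →
          (∀ t, L • y' t = (-r) • y t + u23 t - y34 t + L • (u1 t • Jmat.mulVec (y t))) →
          ∀ t ≥ (0 : ℝ),
            enorm2 (y t - yref) ≤
              c * Real.exp (-(γ * t)) *
                (enorm2 (y 0 - yref) + enorm2 (xc 0 + r • KI⁻¹.mulVec yref)) := by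
  set P : EuclideanSpace ℝ (Fin 2) →L[ℝ] EuclideanSpace ℝ (Fin 2) :=
    r • 1 + toEuclideanCLM (𝕜 := ℝ) KP
  have hP (x : EuclideanSpace ℝ (Fin 2)) : r * ‖x‖ ^ 2 ≤ ⟪P x, x⟫ := by
    simp only [P, _root_.add_apply, _root_.smul_apply, one_apply_eq_self, inner_add_left,
      real_inner_smul_left, real_inner_self_eq_norm_sq]
    linarith [hKP.posSemidef.inner_toEuclideanCLM_self_nonneg x]
  obtain ⟨a, ha, hIa⟩ := (toEuclideanCLM (𝕜 := ℝ) KI).exists_pos_mul_norm_sq_le_inner_self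
    fun x hx => hKI.inner_toEuclideanCLM_self_pos hx
  obtain ⟨c, hc, γ, hγ, hdecay⟩ := exists_exp_decay_of_pi_loop hL hr ha hP hIa
    (isSymmetric_toEuclideanLin_iff.mpr hKI.isHermitian)
  refine ⟨c, hc, γ, hγ, fun yref _ _ _ _ xc y y' u23 hu23 hxc hy hode t ht => ?_⟩
  have hloop (s : ℝ) : L • WithLp.toLp 2 (y' s) = -P (WithLp.toLp 2 (y s - yref))
      - toEuclideanCLM (𝕜 := ℝ) KI (WithLp.toLp 2 (xc s + r • KI⁻¹ *ᵥ yref)) := by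
    apply WithLp.ofLp_injective
    simp only [P, WithLp.ofLp_smul, WithLp.ofLp_sub, WithLp.ofLp_neg, WithLp.ofLp_add,
      _root_.add_apply, _root_.smul_apply, one_apply_eq_self, ofLp_toEuclideanCLM]
    exact pi_closed_loop_error_eq ((isUnit_iff_isUnit_det KI).mp hKI.isUnit) (hu23 s) (hode s)
  simpa only [enorm2_eq_norm] using hdecay (fun s => WithLp.toLp 2 (y s - yref))
    (fun s => WithLp.toLp 2 (y' s)) (fun s => WithLp.toLp 2 (xc s + r • KI⁻¹ *ᵥ yref))
    (fun s => ((hy s).sub_const yref).toLp) (fun s => ((hxc s).add_const _).toLp) hloop t ht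

/-- Proposition 2: the partial-linearizing PI current controller
`u23 = -K_P(y - y_ref) - K_I x_c + y34 - L·u₁·J·y` ensures exponential regulation
of the converter current `y` to the constant reference `y_ref`, with rate and
overshoot constants depending only on `r, L, K_P, K_I`. -/
theorem pi_current_controller_exponential_regulation
    (r L : ℝ) (hr : 0 < r) (hL : 0 < L)
    (KP KI : Matrix (Fin 2) (Fin 2) ℝ)
    (hKPs : KP.IsSymm) (hKIs : KI.IsSymm)
    (hKP : KP.PosDef) (hKI : KI.PosDef) :
    ∃ c > (0 : ℝ), ∃ γ > (0 : ℝ),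
      ∀ (yref : Fin 2 → ℝ) (y34 : ℝ → Fin 2 → ℝ) (u1 : ℝ → ℝ),
        Continuous y34 → Continuous u1 →
        ∀ (xc y y' u23 : ℝ → Fin 2 → ℝ),
          (∀ t, u23 t = -KP.mulVec (y t - yref) - KI.mulVec (xc t) + y34 t
              - L • (u1 t • Jmat.mulVec (y t))) →
          (∀ t, HasDerivAt xc (y t - yref) t) →
          (∀ t, HasDerivAt y (y' t) t) →
          (∀ t, L • y' t = (-r) • y t + u23 t - y34 t + L • (u1 t • Jmat.mulVec (y t))) →
          ∀ t ≥ (0 : ℝ),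
            enorm2 (y t - yref) ≤
              c * Real.exp (-(γ * t)) *
                (enorm2 (y 0 - yref) + enorm2 (xc 0 + r • KI⁻¹.mulVec yref)) :=
  pi_current_controller_exponential_regulation_general r L hr hL KP KI hKP hKI
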